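/- arXiv:2406.07554 — 2 statements merged into one kernel-verified Lean document; each statement's English description precedes it below -/
import Mathlib

section
/- Let g be a centerless Lie 2-algebra with standard maximal torus t, Cartan subalgebra h = t ⊕ n, and root space decomposition g = t ⊕ n ⊕ ⊕_{ξ∈Δ} g_ξ. If dim(g_ξ) = 1 for every t-root ξ ∈ Δ, then I := n ⊕ ⊕_{ξ∈Δ} g_ξ is an ideal of g. -/
/-- A 2-map on a Lie algebra over the field `F` (char 2 version of a restricted structure):
`(c • x)^[2] = c^2 • x^[2]`, `ad (x^[2]) = (ad x) ∘ (ad x)` and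
`(x+y)^[2] = x^[2] + y^[2] + [x,y]`. -/
structure IsTwoMap (F : Type*) [Field F] {g : Type*} [LieRing g] [LieAlgebra F g]
    (p : g → g) : Prop where
  smul_pow : ∀ (c : F) (x : g), p (c • x) = (c ^ 2) • p x
  ad_pow : ∀ x y : g, ⁅p x, y⁆ = ⁅x, ⁅x, y⁆⁆
  add_pow : ∀ x y : g, p (x + y) = p x + p y + ⁅x, y⁆

/-- An element is 2-nilpotent if some iterate of the 2-map annihilates it. -/
def IsTwoNilpotent {g : Type*} [Zero g] (p : g → g) (x : g) : Prop :=
  ∃ k : ℕ, p^[k] x = 0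

/-- A torus of a Lie 2-algebra: a Lie subalgebra closed under the 2-map on which the
2-map is invertible (bijective). -/
def IsTorus (F : Type*) [Field F] {g : Type*} [LieRing g] [LieAlgebra F g]
    (p : g → g) (t : LieSubalgebra F g) : Prop :=
  (∀ x ∈ t, p x ∈ t) ∧ Set.BijOn p (t : Set g) (t : Set g)

/-- A maximal torus of a Lie 2-algebra. -/
def IsMaxTorus (F : Type*) [Field F] {g : Type*} [LieRing g] [LieAlgebra F g]
    (p : g → g) (t : LieSubalgebra F g) : Prop :=
  IsTorus F p t ∧ ∀ s : LieSubalgebra F g, IsTorus F p s → t ≤ s → s = t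

/-- The weight (root) space of a linear functional `lam` on a torus `t`:
`g_lam = {v | [x, v] = lam x • v for all x ∈ t}`. -/
def rootSpace {F : Type*} [Field F] {g : Type*} [LieRing g] [LieAlgebra F g]
    (t : LieSubalgebra F g) (lam : Module.Dual F t) : Submodule F g where
  carrier := {v | ∀ x : t, ⁅(x : g), v⁆ = lam x • v}
  add_mem' := by
    intro a b ha hb x
    rw [lie_add, ha x, hb x, smul_add]
  zero_mem' := by
    intro x
    rw [lie_zero, smul_zero]
  smul_mem' := by
    intro c v hv x
    rw [lie_smul, hv x, smul_comm]

/-- The set of `t`-roots: nonzero functionals with nonzero root space. -/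
def rootSet {F : Type*} [Field F] {g : Type*} [LieRing g] [LieAlgebra F g]
    (t : LieSubalgebra F g) : Set (Module.Dual F t) :=
  {lam | lam ≠ 0 ∧ rootSpace t lam ≠ ⊥}

/-- The subspace `N(σ, δ) = {x ∈ g_σ : [x, g_σ] ⊆ n and [[x, g_δ], g_{σ+δ}] ⊆ n}`,
given as `Nspace n g_σ g_δ g_{σ+δ}`. -/
def Nspace {F : Type*} [Field F] {g : Type*} [LieRing g] [LieAlgebra F g]
    (n gs gd gsd : Submodule F g) : Submodule F g where
  carrier := {x | x ∈ gs ∧ (∀ y ∈ gs, ⁅x, y⁆ ∈ n) ∧ ∀ z ∈ gd, ∀ w ∈ gsd, ⁅⁅x, z⁆, w⁆ ∈ n}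
  add_mem' := by
    intro a b ha hb
    obtain ⟨ha1, ha2, ha3⟩ := ha
    obtain ⟨hb1, hb2, hb3⟩ := hb
    refine ⟨gs.add_mem ha1 hb1, fun y hy => ?_, fun z hz w hw => ?_⟩
    · rw [add_lie]
      exact n.add_mem (ha2 y hy) (hb2 y hy)
    · rw [add_lie, add_lie]
      exact n.add_mem (ha3 z hz w hw) (hb3 z hz w hw)
  zero_mem' := by
    refine ⟨gs.zero_mem, fun y hy => ?_, fun z hz w hw => ?_⟩
    · rw [zero_lie]; exact n.zero_mem
    · rw [zero_lie, zero_lie]; exact n.zero_mem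
  smul_mem' := by
    intro c x hx
    obtain ⟨h1, h2, h3⟩ := hx
    refine ⟨gs.smul_mem c h1, fun y hy => ?_, fun z hz w hw => ?_⟩
    · rw [smul_lie]; exact n.smul_mem c (h2 y hy)
    · rw [smul_lie, smul_lie]; exact n.smul_mem c (h3 z hz w hw)

/-!
A toral element `x ∈ t` acts semisimply on `g`: the spans of the iterates `p^[k] x, p^[k+1] x, …`
form a descending chain, which stabilizes; since `p` is injective on the abelian algebra `t` and
maps each such span onto the next one, the chain is constant. So `x = ∑ cᵢ p^[i+1] x`, and `ad x`
is a root of the separable polynomial `X - ∑ cᵢ X ^ 2 ^ (i + 1)`. Hence `g` is the sum of the root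
spaces `g_λ`, and it suffices to show `[g_λ, I] ⊆ I` for every `λ`. For `λ = 0` this is the
standardness of `t`. For a root `ξ`, `[g_ξ, g_η] ⊆ g_{ξ+η}` lies in `I` unless `ξ + η = 0`, that is
`η = ξ` in characteristic 2, and then `[g_ξ, g_ξ] = 0` because `g_ξ` is one-dimensional.
-/

open Submodule LieModule

namespace Module.End

variable {K M : Type*} [Field K] [AddCommGroup M] [Module K M]

open Polynomial in
theorem isSemisimple_of_eq_sum_pow_pow_succ (q : ℕ) [CharP K q] {A : End K M} (c : ℕ →₀ K)
    (hA : A = c.sum fun i a => a • A ^ q ^ (i + 1)) : A.IsSemisimple := by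
  set f : K[X] := X - c.sum fun i a => C a * X ^ q ^ (i + 1)
  have hf : aeval A f = 0 := by
    rw [map_sub, aeval_X, map_finsuppSum, sub_eq_zero]
    conv_lhs => rw [hA]
    simp [Algebra.smul_def]
  have hderiv : derivative f = 1 := by
    simp [f, map_finsuppSum, derivative_X_pow, CharP.cast_eq_zero]
  refine isSemisimple_of_squarefree_aeval_eq_zero (Separable.squarefree ?_) hf
  rw [separable_def, hderiv]
  exact isCoprime_one_right

end Module.End

def iterateSpan (F : Type*) [Field F] {g : Type*} [AddCommGroup g] [Module F g] (p : g → g)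
    (y : g) : Submodule F g :=
  span F (Set.range fun i => p^[i] y)

section iterateSpan

variable {F g : Type*} [Field F] [AddCommGroup g] [Module F g] {p : g → g}

theorem iterateSpan_apply_le (y : g) : iterateSpan F p (p y) ≤ iterateSpan F p y := by
  refine span_mono ?_
  rintro _ ⟨i, rfl⟩
  exact ⟨i + 1, (Function.iterate_succ_apply p i y).symm⟩

end iterateSpan

namespace IsTwoMap

variable {F g : Type*} [Field F] [LieRing g] [LieAlgebra F g] {p : g → g}

theorem map_zero (hp : IsTwoMap F p) : p 0 = 0 := by
  simpa using hp.smul_pow 0 0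

theorem map_add_of_lie_eq_zero (hp : IsTwoMap F p) {x y : g} (h : ⁅x, y⁆ = 0) :
    p (x + y) = p x + p y := by
  rw [hp.add_pow, h, add_zero]

theorem ad_iterate (hp : IsTwoMap F p) (x : g) (i : ℕ) :
    LieAlgebra.ad F g (p^[i] x) = LieAlgebra.ad F g x ^ 2 ^ i := by
  induction i with
  | zero => simp
  | succ i ih =>
    ext y
    rw [Function.iterate_succ_apply', pow_succ, pow_mul, sq, Module.End.mul_apply, ← ih]
    simp [hp.ad_pow]

theorem image_span [PerfectRing F 2] (hp : IsTwoMap F p) {V : Submodule F g}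
    (hV : ∀ a ∈ V, ∀ b ∈ V, ⁅a, b⁆ = 0) {S : Set g} (hS : S ⊆ V) :
    p '' span F S = span F (p '' S) := by
  have hSV : span F S ≤ V := span_le.mpr hS
  apply le_antisymm
  · rintro _ ⟨a, ha, rfl⟩
    induction ha using span_induction with
    | mem x hx => exact subset_span ⟨x, hx, rfl⟩
    | zero => simp [hp.map_zero]
    | add x y hx hy ihx ihy =>
      rw [hp.map_add_of_lie_eq_zero (hV x (hSV hx) y (hSV hy))]
      exact add_mem ihx ihy
    | smul c x _ ih =>
      rw [hp.smul_pow]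
      exact smul_mem _ _ ih
  · intro b hb
    induction hb using span_induction with
    | mem x hx =>
      obtain ⟨a, ha, rfl⟩ := hx
      exact ⟨a, subset_span ha, rfl⟩
    | zero => exact ⟨0, zero_mem _, hp.map_zero⟩
    | add x y _ _ ihx ihy =>
      obtain ⟨a, ha, rfl⟩ := ihx
      obtain ⟨b, hb, rfl⟩ := ihy
      exact ⟨a + b, add_mem ha hb, hp.map_add_of_lie_eq_zero (hV a (hSV ha) b (hSV hb))⟩
    | smul c x _ ih =>
      obtain ⟨a, ha, rfl⟩ := ih
      obtain ⟨r, rfl⟩ := (PerfectRing.bijective_frobenius (R := F) (p := 2)).surjective c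
      exact ⟨r • a, smul_mem _ _ ha, hp.smul_pow r a⟩

theorem image_iterateSpan [PerfectRing F 2] (hp : IsTwoMap F p) {t : LieSubalgebra F g}
    [IsLieAbelian t] (ht : Set.MapsTo p t t) {y : g} (hy : y ∈ t) :
    p '' iterateSpan F p y = iterateSpan F p (p y) := by
  have hV : ∀ a ∈ t.toSubmodule, ∀ b ∈ t.toSubmodule, ⁅a, b⁆ = 0 := fun a ha b hb =>
    congrArg Subtype.val (trivial_lie_zero t t ⟨a, ha⟩ ⟨b, hb⟩)
  rw [iterateSpan, hp.image_span hV (Set.range_subset_iff.mpr (ht.iterate · hy)), ← Set.range_comp]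
  congr 3 with i
  exact (Function.iterate_succ_apply' p i y).symm.trans (Function.iterate_succ_apply p i y)

theorem iterateSpan_eq_iterateSpan_apply [PerfectRing F 2] [FiniteDimensional F g]
    (hp : IsTwoMap F p) {t : LieSubalgebra F g} [IsLieAbelian t] (ht : IsTorus F p t) {x : g}
    (hx : x ∈ t) : iterateSpan F p x = iterateSpan F p (p x) := by
  set O : ℕ → Submodule F g := fun k => iterateSpan F p (p^[k] x)
  have hmaps : Set.MapsTo p t t := ht.1
  have hsub (k : ℕ) : (O k : Set g) ⊆ t :=
    span_le (p := t.toSubmodule).mpr <| Set.range_subset_iff.mpr fun i =>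
      hmaps.iterate i (hmaps.iterate k hx)
  have himage (k : ℕ) : p '' O k = O (k + 1) := by
    rw [hp.image_iterateSpan hmaps (hmaps.iterate k hx), ← Function.iterate_succ_apply' p k x]
  have hdesc (k : ℕ) (h : O (k + 1) = O (k + 2)) : O k = O (k + 1) := by
    refine SetLike.coe_injective <| (ht.2.injOn.image_eq_image_iff (hsub k) (hsub (k + 1))).mp ?_
    rw [himage, himage, h]
  obtain ⟨k, hk⟩ : ∃ k, O k = O (k + 1) := by
    obtain ⟨_, ⟨k, rfl⟩, hmin⟩ := IsArtinian.set_has_minimal (Set.range O) ⟨O 0, 0, rfl⟩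
    refine ⟨k, (eq_of_le_of_not_lt ?_ (hmin _ ⟨k + 1, rfl⟩)).symm⟩
    simpa only [O, Function.iterate_succ_apply'] using iterateSpan_apply_le (p^[k] x)
  induction k with
  | zero => exact hk
  | succ k ih => exact ih (hdesc k hk)

theorem isSemisimple_ad [CharP F 2] [PerfectRing F 2] [FiniteDimensional F g]
    (hp : IsTwoMap F p) {t : LieSubalgebra F g} [IsLieAbelian t] (ht : IsTorus F p t) {x : g}
    (hx : x ∈ t) : (LieAlgebra.ad F g x).IsSemisimple := by
  have hmem : x ∈ iterateSpan F p (p x) :=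
    hp.iterateSpan_eq_iterateSpan_apply ht hx ▸ subset_span ⟨0, rfl⟩
  obtain ⟨c, hc⟩ := Finsupp.mem_span_range_iff_exists_finsupp.mp hmem
  refine Module.End.isSemisimple_of_eq_sum_pow_pow_succ 2 c ?_
  conv_lhs => rw [← hc]
  simp only [map_finsuppSum, map_smul, ← Function.iterate_succ_apply, hp.ad_iterate]

end IsTwoMap

section RootSpaces

variable {F g : Type*} [Field F] [LieRing g] [LieAlgebra F g] {t : LieSubalgebra F g}

theorem lie_mem_rootSpace_add {ξ η : Module.Dual F t} {x y : g} (hx : x ∈ rootSpace t ξ)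
    (hy : y ∈ rootSpace t η) : ⁅x, y⁆ ∈ rootSpace t (ξ + η) := fun s => by
  rw [leibniz_lie, hx s, hy s, smul_lie, lie_smul, LinearMap.add_apply, add_smul]

theorem isLieAbelian_of_le_rootSpace_zero (h : t.toSubmodule ≤ rootSpace t 0) :
    IsLieAbelian t where
  trivial a b := Subtype.ext <| by simpa using h b.2 a

theorem genWeightSpace_le_rootSpace [IsLieAbelian t]
    (hss : ∀ x ∈ t, (LieAlgebra.ad F g x).IsSemisimple) (χ : Weight F t g) :
    (genWeightSpace g χ : Submodule F g) ≤ rootSpace t χ := by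
  intro v hv x
  have hgen : v ∈ (toEnd F t g x).maxGenEigenspace (χ x) :=
    (Module.End.mem_maxGenEigenspace _ _ _).mpr ((mem_genWeightSpace g χ v).mp hv x)
  change v ∈ (LieAlgebra.ad F g x).maxGenEigenspace (χ x) at hgen
  rw [(hss x x.2).isFinitelySemisimple.maxGenEigenspace_eq_eigenspace] at hgen
  exact Module.End.mem_eigenspace_iff.mp hgen

theorem lie_eq_zero_of_finrank_eq_one {S : Submodule F g} (hS : Module.finrank F S = 1) {x y : g}
    (hx : x ∈ S) (hy : y ∈ S) : ⁅x, y⁆ = 0 := by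
  obtain ⟨v, -, hv⟩ := finrank_eq_one_iff'.mp hS
  obtain ⟨a, ha⟩ := hv ⟨x, hx⟩
  obtain ⟨b, hb⟩ := hv ⟨y, hy⟩
  have hxv : a • (v : g) = x := congrArg Subtype.val ha
  have hyv : b • (v : g) = y := congrArg Subtype.val hb
  rw [← hxv, ← hyv, smul_lie, lie_smul, lie_self, smul_zero, smul_zero]

variable (t) in
def nilRootSum (n : Submodule F g) : Submodule F g :=
  n ⊔ ⨆ ξ ∈ rootSet t, rootSpace t ξ

variable {n : Submodule F g}

theorem rootSpace_le_nilRootSum {ξ : Module.Dual F t} (hξ : ξ ≠ 0) :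
    rootSpace t ξ ≤ nilRootSum t n := by
  by_cases hbot : rootSpace t ξ = ⊥
  · simp [hbot]
  · exact le_sup_of_le_right (le_iSup₂_of_le (f := fun ξ _ => rootSpace t ξ) ξ ⟨hξ, hbot⟩ le_rfl)

theorem lie_mem_nilRootSum_of_forall {x : g} (hn : ∀ y ∈ n, ⁅x, y⁆ ∈ nilRootSum t n)
    (hroot : ∀ ξ ∈ rootSet t, ∀ y ∈ rootSpace t ξ, ⁅x, y⁆ ∈ nilRootSum t n) {y : g}
    (hy : y ∈ nilRootSum t n) : ⁅x, y⁆ ∈ nilRootSum t n := by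
  suffices nilRootSum t n ≤ (nilRootSum t n).comap (LieAlgebra.ad F g x) from this hy
  exact sup_le hn (iSup₂_le hroot)

theorem lie_mem_nilRootSum_of_mem_rootSpace_zero
    (hstd : ∀ x ∈ rootSpace t 0, ∀ y ∈ n, ⁅x, y⁆ ∈ n) {x y : g} (hx : x ∈ rootSpace t 0)
    (hy : y ∈ nilRootSum t n) : ⁅x, y⁆ ∈ nilRootSum t n := by
  refine lie_mem_nilRootSum_of_forall (fun z hz => mem_sup_left (hstd x hx z hz))
    (fun ξ hξ z hz => rootSpace_le_nilRootSum hξ.1 ?_) hy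
  simpa using lie_mem_rootSpace_add hx hz

theorem lie_mem_nilRootSum_of_mem_rootSet [CharP F 2] (hn0 : n ≤ rootSpace t 0)
    (hone : ∀ ξ ∈ rootSet t, Module.finrank F (rootSpace t ξ) = 1) {ξ : Module.Dual F t}
    (hξ : ξ ∈ rootSet t) {x y : g} (hx : x ∈ rootSpace t ξ) (hy : y ∈ nilRootSum t n) :
    ⁅x, y⁆ ∈ nilRootSum t n := by
  refine lie_mem_nilRootSum_of_forall (fun z hz => rootSpace_le_nilRootSum hξ.1 ?_)
    (fun η _ z hz => ?_) hy
  · rw [← lie_skew]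
    simpa using neg_mem (lie_mem_rootSpace_add (hn0 hz) hx)
  · by_cases hsum : ξ + η = 0
    · have hηξ : η = ξ :=
        LinearMap.ext fun s => (CharTwo.add_eq_zero.mp (LinearMap.congr_fun hsum s)).symm
      rw [lie_eq_zero_of_finrank_eq_one (hone ξ hξ) hx (hηξ ▸ hz)]
      exact zero_mem _
    · exact rootSpace_le_nilRootSum hsum (lie_mem_rootSpace_add hx hz)

theorem lie_mem_nilRootSum_of_mem_rootSpace [CharP F 2]
    (hstd : ∀ x ∈ rootSpace t 0, ∀ y ∈ n, ⁅x, y⁆ ∈ n) (hn0 : n ≤ rootSpace t 0)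
    (hone : ∀ ξ ∈ rootSet t, Module.finrank F (rootSpace t ξ) = 1) {ξ : Module.Dual F t}
    {x y : g} (hx : x ∈ rootSpace t ξ) (hy : y ∈ nilRootSum t n) : ⁅x, y⁆ ∈ nilRootSum t n := by
  by_cases hξ0 : ξ = 0
  · exact lie_mem_nilRootSum_of_mem_rootSpace_zero hstd (hξ0 ▸ hx) hy
  by_cases hbot : rootSpace t ξ = ⊥
  · simp [(Submodule.eq_bot_iff _).mp hbot x hx]
  exact lie_mem_nilRootSum_of_mem_rootSet hn0 hone ⟨hξ0, hbot⟩ hx hy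

end RootSpaces

theorem statement2_general
    {F : Type*} [Field F] [IsAlgClosed F] [CharP F 2]
    {g : Type*} [LieRing g] [LieAlgebra F g] [FiniteDimensional F g]
    (p : g → g) (hp : IsTwoMap F p)
    (t : LieSubalgebra F g) (hmax : IsMaxTorus F p t)
    (n : Submodule F g)
    (hstd : ∀ x ∈ rootSpace t 0, ∀ y ∈ n, ⁅x, y⁆ ∈ n)
    (hdecomp : rootSpace t 0 = t.toSubmodule ⊔ n)
    (hone : ∀ ξ ∈ rootSet t, Module.finrank F (rootSpace t ξ) = 1) :
    ∀ x y : g, y ∈ n ⊔ (⨆ ξ ∈ rootSet t, rootSpace t ξ) →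
      ⁅x, y⁆ ∈ n ⊔ (⨆ ξ ∈ rootSet t, rootSpace t ξ) := by
  have : IsLieAbelian t := isLieAbelian_of_le_rootSpace_zero (hdecomp ▸ le_sup_left)
  have hn0 : n ≤ rootSpace t 0 := hdecomp ▸ le_sup_right
  intro x y hy
  have hx : x ∈ ⨆ χ : Weight F t g, (genWeightSpace g χ : Submodule F g) := by
    simp [← LieSubmodule.iSup_toSubmodule, iSup_genWeightSpace_eq_top']
  refine iSup_induction _ (motive := fun x => ⁅x, y⁆ ∈ nilRootSum t n) hx (fun χ z hz => ?_)
    (by simp) (fun z w hz hw => by simpa only [add_lie] using add_mem hz hw)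
  have hss (z : g) (hz : z ∈ t) := hp.isSemisimple_ad hmax.1 hz
  exact lie_mem_nilRootSum_of_mem_rootSpace hstd hn0 hone (genWeightSpace_le_rootSpace hss χ hz) hy

/-- if all root spaces are one-dimensional, then `n ⊕ ⊕_{ξ∈Δ} g_ξ`
is an ideal of `g`. -/
theorem statement2
    {F : Type*} [Field F] [IsAlgClosed F] [CharP F 2]
    {g : Type*} [LieRing g] [LieAlgebra F g] [FiniteDimensional F g]
    (p : g → g) (hp : IsTwoMap F p)
    (hcenter : LieAlgebra.center F g = ⊥)
    (t : LieSubalgebra F g) (hmax : IsMaxTorus F p t)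
    (n : Submodule F g)
    (hn : ∀ x : g, x ∈ n ↔ x ∈ rootSpace t 0 ∧ IsTwoNilpotent p x)
    (hstd : ∀ x ∈ rootSpace t 0, ∀ y ∈ n, ⁅x, y⁆ ∈ n)
    (hdecomp : rootSpace t 0 = t.toSubmodule ⊔ n)
    (hdisj : Disjoint t.toSubmodule n)
    (hone : ∀ ξ ∈ rootSet t, Module.finrank F (rootSpace t ξ) = 1) :
    ∀ x y : g, y ∈ n ⊔ (⨆ ξ ∈ rootSet t, rootSpace t ξ) →
      ⁅x, y⁆ ∈ n ⊔ (⨆ ξ ∈ rootSet t, rootSpace t ξ) :=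
  statement2_general p hp t hmax n hstd hdecomp hone
end

section
/- Let g be a centerless Lie 2-algebra with MT(g) = 3, standard maximal torus t with toral basis {t1, t2, t3} and dual basis {α, β, γ} of t*, whose t-root set is Δ = {α, β, γ, α+β, α+γ, β+γ, α+β+γ} (all seven nonzero elements of t*). If dim(g_α) > dim(g_ξ) for every ξ ∈ Δ \ {α}, then I := span{t2, t3} ⊕ n ⊕ ⊕_{ξ∈Δ} g_ξ is an ideal of g. -/
set_option maxHeartbeats 1600000

section AuxStatement9

variable {F : Type*} [Field F] {g : Type*} [LieRing g] [LieAlgebra F g]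

lemma mem_rootSpace_iff' {t : LieSubalgebra F g} {lam : Module.Dual F t} {v : g} :
    v ∈ rootSpace t lam ↔ ∀ x : t, ⁅(x : g), v⁆ = lam x • v := Iff.rfl

lemma rootSpace_lie' {t : LieSubalgebra F g} {lam mu : Module.Dual F t} {x y : g}
    (hx : x ∈ rootSpace t lam) (hy : y ∈ rootSpace t mu) :
    ⁅x, y⁆ ∈ rootSpace t (lam + mu) := by
  intro z
  rw [leibniz_lie, hx z, hy z, smul_lie, lie_smul, LinearMap.add_apply, add_smul]

lemma iter_lie' {p : g → g} (hp : IsTwoMap F p) :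
    ∀ (K : ℕ) (z w : g), ⁅p^[K] z, w⁆ = (fun u : g => ⁅z, u⁆)^[2 ^ K] w := by
  intro K
  induction K with
  | zero => intro z w; simp
  | succ K ih =>
    intro z w
    rw [Function.iterate_succ_apply, ih (p z) w]
    have hfun : (fun u : g => ⁅p z, u⁆) = (fun u : g => ⁅z, u⁆)^[2] := by
      funext u
      rw [show (2 : ℕ) = 1 + 1 from rfl, Function.iterate_add_apply,
        Function.iterate_one, hp.ad_pow]
    rw [hfun, ← Function.iterate_mul]
    congr 1
    rw [pow_succ]
    ring

end AuxStatement9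
/-- if all seven roots occur and `dim g_α > dim g_ξ` for every root
`ξ ≠ α`, then `span{t2, t3} ⊕ n ⊕ ⊕_{ξ∈Δ} g_ξ` is an ideal of `g`. -/
theorem statement9
    {F : Type*} [Field F] [IsAlgClosed F] [CharP F 2]
    {g : Type*} [LieRing g] [LieAlgebra F g] [FiniteDimensional F g]
    (p : g → g) (hp : IsTwoMap F p)
    (hcenter : LieAlgebra.center F g = ⊥)
    (t : LieSubalgebra F g) (hmax : IsMaxTorus F p t)
    (n : Submodule F g)
    (hn : ∀ x : g, x ∈ n ↔ x ∈ rootSpace t 0 ∧ IsTwoNilpotent p x)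
    (hstd : ∀ x ∈ rootSpace t 0, ∀ y ∈ n, ⁅x, y⁆ ∈ n)
    (hdecomp : rootSpace t 0 = t.toSubmodule ⊔ n)
    (hdisj : Disjoint t.toSubmodule n)
    (hrank : ∀ s : LieSubalgebra F g, IsTorus F p s → Module.finrank F s ≤ 3)
    (hdimt : Module.finrank F t = 3)
    (t₁ t₂ t₃ : t)
    (htor1 : p (t₁ : g) = (t₁ : g)) (htor2 : p (t₂ : g) = (t₂ : g))
    (htor3 : p (t₃ : g) = (t₃ : g))
    (hspan : Submodule.span F ({t₁, t₂, t₃} : Set t) = ⊤)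
    (α β γ : Module.Dual F t)
    (hα : α t₁ = 1 ∧ α t₂ = 0 ∧ α t₃ = 0)
    (hβ : β t₁ = 0 ∧ β t₂ = 1 ∧ β t₃ = 0)
    (hγ : γ t₁ = 0 ∧ γ t₂ = 0 ∧ γ t₃ = 1)
    (hroots : rootSet t = ({α, β, γ, α + β, α + γ, β + γ, α + β + γ} :
      Set (Module.Dual F t)))
    (hbig : ∀ ξ ∈ rootSet t, ξ ≠ α →
      Module.finrank F (rootSpace t ξ) < Module.finrank F (rootSpace t α)) :
    ∀ x y : g,
      y ∈ Submodule.span F ({(t₂ : g), (t₃ : g)} : Set g) ⊔ n ⊔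
          (⨆ ξ ∈ rootSet t, rootSpace t ξ) →
      ⁅x, y⁆ ∈ Submodule.span F ({(t₂ : g), (t₃ : g)} : Set g) ⊔ n ⊔
          (⨆ ξ ∈ rootSet t, rootSpace t ξ) := by
  intro x y hy
  obtain ⟨ha1, ha2, ha3⟩ := hα
  obtain ⟨hb1, hb2, hb3⟩ := hβ
  obtain ⟨hc1, hc2, hc3⟩ := hγ
  have htwo : (1 : F) + 1 = 0 := by
    rw [one_add_one_eq_two]
    exact_mod_cast CharP.cast_eq_zero F 2
  set I := Submodule.span F ({(t₂ : g), (t₃ : g)} : Set g) ⊔ n ⊔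
      (⨆ ξ ∈ rootSet t, rootSpace t ξ) with hI
  set S := rootSpace t 0 ⊔ (⨆ ξ ∈ rootSet t, rootSpace t ξ) with hS
  -- basic facts
  have hts : t.toSubmodule ≤ rootSpace t 0 := by rw [hdecomp]; exact le_sup_left
  have hαroot : α ∈ rootSet t := by rw [hroots]; exact Set.mem_insert _ _
  -- representation of any functional in terms of α, β, γ
  have hrepr : ∀ lam : Module.Dual F t, lam = lam t₁ • α + lam t₂ • β + lam t₃ • γ := by
    intro lam
    apply LinearMap.ext_on hspan
    intro z hz
    simp only [Set.mem_insert_iff, Set.mem_singleton_iff] at hz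
    rcases hz with rfl | rfl | rfl <;>
      simp [ha1, ha2, ha3, hb1, hb2, hb3, hc1, hc2, hc3]
  -- recognizing roots by their {0,1} values
  have hmem7 : ∀ lam : Module.Dual F t, (lam t₁ = 0 ∨ lam t₁ = 1) →
      (lam t₂ = 0 ∨ lam t₂ = 1) → (lam t₃ = 0 ∨ lam t₃ = 1) →
      ¬(lam t₁ = 0 ∧ lam t₂ = 0 ∧ lam t₃ = 0) → lam ∈ rootSet t := by
    intro lam h1 h2 h3 hnz
    have hx := hrepr lam
    rw [hroots]
    rcases h1 with h1 | h1 <;> rcases h2 with h2 | h2 <;> rcases h3 with h3 | h3 <;>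
      rw [h1, h2, h3] at hx <;>
      simp only [zero_smul, one_smul, add_zero, zero_add] at hx <;>
      [ exact absurd ⟨h1, h2, h3⟩ hnz ; skip ; skip ; skip ; skip ; skip ; skip ; skip] <;>
      (rw [hx]; simp)
  -- values of roots are 0 or 1
  have hvals : ∀ ξ ∈ rootSet t, (ξ t₁ = 0 ∨ ξ t₁ = 1) ∧ (ξ t₂ = 0 ∨ ξ t₂ = 1) ∧
      (ξ t₃ = 0 ∨ ξ t₃ = 1) := by
    intro ξ hξ
    rw [hroots] at hξ
    simp only [Set.mem_insert_iff, Set.mem_singleton_iff] at hξ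
    rcases hξ with rfl | rfl | rfl | rfl | rfl | rfl | rfl <;>
      refine ⟨?_, ?_, ?_⟩ <;>
      simp [ha1, ha2, ha3, hb1, hb2, hb3, hc1, hc2, hc3]
  have hadd01 : ∀ u v : F, (u = 0 ∨ u = 1) → (v = 0 ∨ v = 1) →
      ((u + v = 0 ∨ u + v = 1) ∧ (u + v = 0 → u = v)) := by
    intro u v hu hv
    rcases hu with rfl | rfl <;> rcases hv with rfl | rfl <;>
      constructor <;> simp [htwo]
  -- sum of two distinct roots is a root
  have hsum_root : ∀ σ ∈ rootSet t, ∀ ξ ∈ rootSet t, σ ≠ ξ → σ + ξ ∈ rootSet t := by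
    intro σ hσ ξ hξ hne
    obtain ⟨hs1, hs2, hs3⟩ := hvals σ hσ
    obtain ⟨hx1, hx2, hx3⟩ := hvals ξ hξ
    have e1 : (σ + ξ) t₁ = σ t₁ + ξ t₁ := rfl
    have e2 : (σ + ξ) t₂ = σ t₂ + ξ t₂ := rfl
    have e3 : (σ + ξ) t₃ = σ t₃ + ξ t₃ := rfl
    apply hmem7
    · rw [e1]; exact (hadd01 _ _ hs1 hx1).1
    · rw [e2]; exact (hadd01 _ _ hs2 hx2).1
    · rw [e3]; exact (hadd01 _ _ hs3 hx3).1
    · rintro ⟨h1, h2, h3⟩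
      apply hne
      apply LinearMap.ext_on hspan
      intro z hz
      simp only [Set.mem_insert_iff, Set.mem_singleton_iff] at hz
      rcases hz with rfl | rfl | rfl
      · exact (hadd01 _ _ hs1 hx1).2 (by rw [← e1]; exact h1)
      · exact (hadd01 _ _ hs2 hx2).2 (by rw [← e2]; exact h2)
      · exact (hadd01 _ _ hs3 hx3).2 (by rw [← e3]; exact h3)
  -- THE KEY FACT: the 2-map sends root vectors into span{t₂,t₃} ⊔ n
  have hptrick : ∀ σ ∈ rootSet t, ∀ v ∈ rootSpace t σ,
      p v ∈ Submodule.span F ({(t₂ : g), (t₃ : g)} : Set g) ⊔ n := by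
    intro σ hσ v hv
    have hpv0 : p v ∈ rootSpace t 0 := by
      refine mem_rootSpace_iff'.mpr fun z => ?_
      have h1 : ⁅(z : g), v⁆ = σ z • v := (mem_rootSpace_iff'.mp hv) z
      have h2 : ⁅p v, (z : g)⁆ = 0 := by
        rw [hp.ad_pow]
        have h3 : ⁅v, (z : g)⁆ = -(σ z • v) := by rw [← lie_skew, h1]
        rw [h3]
        simp
      rw [← lie_skew, h2]
      simp
    rw [hdecomp] at hpv0
    obtain ⟨τ, hτ, ν, hν, hsum⟩ := Submodule.mem_sup.mp hpv0
    have hν0 : ν ∈ rootSpace t 0 := ((hn ν).mp hν).1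
    obtain ⟨K, hK⟩ := ((hn ν).mp hν).2
    have hnilp : ∀ z : g, (fun w : g => ⁅ν, w⁆)^[2 ^ K] z = 0 := by
      intro z
      rw [← iter_lie' hp K ν z, hK, zero_lie]
    set a : F := α ⟨τ, hτ⟩ with ha_def
    have hkey : ∀ w ∈ rootSpace t α, ⁅p v, w⁆ = a • w + ⁅ν, w⁆ := by
      intro w hw
      rw [← hsum, add_lie, (mem_rootSpace_iff'.mp hw) ⟨τ, hτ⟩]
    have hτz : ∀ z ∈ rootSpace t 0, ⁅p v, z⁆ = ⁅ν, z⁆ := by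
      intro z hz
      rw [← hsum, add_lie]
      have h4 := (mem_rootSpace_iff'.mp hz) ⟨τ, hτ⟩
      simp only [LinearMap.zero_apply, zero_smul] at h4
      rw [h4, zero_add]
    have hH : ∀ m : ℕ, ∀ z ∈ rootSpace t 0,
        (fun w : g => ⁅p v, w⁆)^[m] z = (fun w : g => ⁅ν, w⁆)^[m] z ∧
        (fun w : g => ⁅ν, w⁆)^[m] z ∈ rootSpace t 0 := by
      intro m
      induction m with
      | zero => exact fun z hz => ⟨rfl, hz⟩
      | succ m ih =>
        intro z hz
        have hz' : ⁅ν, z⁆ ∈ rootSpace t 0 := by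
          have h5 := rootSpace_lie' hν0 hz
          simpa using h5
        rw [Function.iterate_succ_apply, Function.iterate_succ_apply, hτz z hz]
        exact ih ⁅ν, z⁆ hz'
    have hAd2 : ∀ (m : ℕ) (z : g),
        (fun w : g => ⁅p v, w⁆)^[m] z = (fun w : g => ⁅v, w⁆)^[2 * m] z := by
      intro m
      induction m with
      | zero => intro z; rfl
      | succ m ih =>
        intro z
        rw [show 2 * (m + 1) = 2 * m + 2 by ring, Function.iterate_succ_apply]
        have h1 : ⁅p v, z⁆ = (fun w : g => ⁅v, w⁆)^[2] z := by
          rw [show (2 : ℕ) = 1 + 1 from rfl, Function.iterate_add_apply,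
            Function.iterate_one, hp.ad_pow]
        rw [h1, ih, ← Function.iterate_add_apply]
    have ha : a = 0 := by
      by_contra hane
      by_cases hσα : σ = α
      · subst hσα
        obtain ⟨w₀, hw₀mem, hw₀ne⟩ := (Submodule.ne_bot_iff _).mp hσ.2
        classical
        have hPex : ∃ m : ℕ, (fun w : g => ⁅ν, w⁆)^[m] w₀ = 0 := ⟨2 ^ K, hnilp w₀⟩
        have hj0 : Nat.find hPex ≠ 0 := by
          intro h
          have h7 := Nat.find_spec hPex
          rw [h] at h7
          exact hw₀ne (by simpa using h7)
        set u := (fun w : g => ⁅ν, w⁆)^[Nat.find hPex - 1] w₀ with hu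
        have hu_ne : u ≠ 0 := Nat.find_min hPex (Nat.pred_lt hj0)
        have hNu : ⁅ν, u⁆ = 0 := by
          have h1 : (fun w : g => ⁅ν, w⁆)^[Nat.find hPex] w₀ = 0 := Nat.find_spec hPex
          rw [← Nat.succ_pred_eq_of_ne_zero hj0, Function.iterate_succ_apply'] at h1
          exact h1
        have hu_mem : u ∈ rootSpace t σ := by
          rw [hu]
          generalize Nat.find hPex - 1 = m
          induction m with
          | zero => exact hw₀mem
          | succ m ih =>
            rw [Function.iterate_succ_apply']
            have h8 := rootSpace_lie' hν0 ih
            simpa using h8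
        have hDu : ⁅p v, u⁆ = a • u := by rw [hkey u hu_mem, hNu, add_zero]
        have hDm : ∀ m : ℕ, (fun w : g => ⁅p v, w⁆)^[m] u = a ^ m • u := by
          intro m
          induction m with
          | zero => simp
          | succ m ih =>
            rw [Function.iterate_succ_apply', ih]
            show ⁅p v, a ^ m • u⁆ = a ^ (m + 1) • u
            rw [lie_smul, hDu, smul_smul, ← pow_succ]
        have hvu0 : ⁅v, u⁆ ∈ rootSpace t 0 := by
          have h1 := rootSpace_lie' hv hu_mem
          have h2 : σ + σ = 0 := by
            ext z
            show σ z + σ z = 0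
            calc σ z + σ z = (1 + 1) * σ z := by ring
              _ = 0 := by rw [htwo, zero_mul]
          rwa [h2] at h1
        have hfin : (fun w : g => ⁅p v, w⁆)^[2 ^ K + 1] u = 0 := by
          have q1 : (fun w : g => ⁅p v, w⁆)^[2 ^ K + 1] u
              = (fun w : g => ⁅v, w⁆)^[2 * 2 ^ K + 2] u := by
            rw [hAd2, show 2 * (2 ^ K + 1) = 2 * 2 ^ K + 2 by ring]
          have q2 : (fun w : g => ⁅v, w⁆)^[2 * 2 ^ K + 2] u
              = (fun w : g => ⁅v, w⁆) ((fun w : g => ⁅v, w⁆)^[2 * 2 ^ K + 1] u) := by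
            rw [show 2 * 2 ^ K + 2 = (2 * 2 ^ K + 1) + 1 by ring,
              Function.iterate_succ_apply']
          have q3 : (fun w : g => ⁅v, w⁆)^[2 * 2 ^ K + 1] u
              = (fun w : g => ⁅v, w⁆)^[2 * 2 ^ K] ⁅v, u⁆ :=
            Function.iterate_succ_apply _ _ _
          have q4 : (fun w : g => ⁅v, w⁆)^[2 * 2 ^ K] ⁅v, u⁆
              = (fun w : g => ⁅ν, w⁆)^[2 ^ K] ⁅v, u⁆ := by
            rw [← hAd2]
            exact (hH (2 ^ K) ⁅v, u⁆ hvu0).1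
          rw [q1, q2, q3, q4, hnilp ⁅v, u⁆]
          simp
        rw [hDm] at hfin
        rcases smul_eq_zero.mp hfin with h | h
        · exact absurd h (pow_ne_zero _ hane)
        · exact hu_ne h
      · have hσα' : α ≠ σ := fun h => hσα h.symm
        have hrootsum := hsum_root α hαroot σ hσ hσα'
        have hne' : α + σ ≠ α := by
          intro h
          have h0 : α + σ = α + 0 := by rw [add_zero]; exact h
          exact hσ.1 (add_left_cancel h0)
        have hlt := hbig (α + σ) hrootsum hne'
        have hmap : ∀ w ∈ rootSpace t α, ⁅v, w⁆ ∈ rootSpace t (α + σ) := by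
          intro w hw
          have h1 := rootSpace_lie' hv hw
          rwa [add_comm σ α] at h1
        let T : (rootSpace t α) →ₗ[F] (rootSpace t (α + σ)) :=
          { toFun := fun w => ⟨⁅v, (w : g)⁆, hmap (w : g) w.2⟩
            map_add' := by intro w₁ w₂; apply Subtype.ext; simp [lie_add]
            map_smul' := by intro c w; apply Subtype.ext; simp [lie_smul] }
        have hTinj : Function.Injective T := by
          rw [← LinearMap.ker_eq_bot, Submodule.eq_bot_iff]
          intro w hw
          have hvw : ⁅v, (w : g)⁆ = 0 := by
            have h1 : T w = 0 := hw
            have h2 := congrArg (Subtype.val) h1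
            simpa [T] using h2
          have hpvw : ⁅p v, (w : g)⁆ = 0 := by rw [hp.ad_pow, hvw, lie_zero]
          have h1 : a • (w : g) + ⁅ν, (w : g)⁆ = 0 := by rw [← hkey _ w.2, hpvw]
          have h2 : ⁅ν, (w : g)⁆ = (-a) • (w : g) := by
            rw [neg_smul]
            exact eq_neg_of_add_eq_zero_right h1
          have h3 : ∀ m : ℕ, (fun w' : g => ⁅ν, w'⁆)^[m] (w : g) = (-a) ^ m • (w : g) := by
            intro m
            induction m with
            | zero => simp
            | succ m ih =>
              rw [Function.iterate_succ_apply', ih]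
              show ⁅ν, (-a) ^ m • (w : g)⁆ = _
              rw [lie_smul, h2, smul_smul, ← pow_succ]
          have h4 := hnilp (w : g)
          rw [h3] at h4
          have h5 : (w : g) = 0 := by
            rcases smul_eq_zero.mp h4 with h | h
            · exact absurd h (pow_ne_zero _ (neg_ne_zero.mpr hane))
            · exact h
          exact Subtype.ext h5
        have hfr := LinearMap.finrank_le_finrank_of_injective hTinj
        omega
    -- now decompose τ and conclude
    have hτspan : (⟨τ, hτ⟩ : t) ∈ Submodule.span F ({t₁, t₂, t₃} : Set t) := by
      rw [hspan]; trivial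
    rw [Submodule.mem_span_insert] at hτspan
    obtain ⟨c₁, z₁, hz₁, hrep₁⟩ := hτspan
    rw [Submodule.mem_span_insert] at hz₁
    obtain ⟨c₂, z₂, hz₂, hrep₂⟩ := hz₁
    rw [Submodule.mem_span_singleton] at hz₂
    obtain ⟨c₃, hc₃⟩ := hz₂
    rw [hrep₂, ← hc₃] at hrep₁
    have hc₁ : c₁ = 0 := by
      have h1 : a = c₁ := by
        rw [ha_def, hrep₁]
        simp [ha1, ha2, ha3]
      rw [← h1, ha]
    have hτval : τ = c₂ • ((t₂ : t) : g) + c₃ • ((t₃ : t) : g) := by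
      have h1 := congrArg (fun z : t => (z : g)) hrep₁
      simpa [hc₁] using h1
    rw [← hsum]
    refine Submodule.add_mem _ (Submodule.mem_sup_left ?_) (Submodule.mem_sup_right hν)
    rw [hτval]
    exact Submodule.mem_span_pair.mpr ⟨c₂, c₃, rfl⟩
  -- bracket stability for pieces
  have main : ∀ x' : g,
      (x' ∈ rootSpace t 0 ∨ ∃ σ ∈ rootSet t, x' ∈ rootSpace t σ) → ⁅x', y⁆ ∈ I := by
    intro x' hx'
    have hIle : I ≤ Submodule.comap (LieAlgebra.ad F g x') I := by
      rcases hx' with h0 | ⟨σ, hσ, hσx⟩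
      · refine sup_le (sup_le ?_ ?_) ?_
        · rw [Submodule.span_le]
          rintro w hw
          simp only [Set.mem_insert_iff, Set.mem_singleton_iff] at hw
          have hz : ∀ z : t, ⁅x', (z : g)⁆ = 0 := by
            intro z
            rw [← lie_skew, (mem_rootSpace_iff'.mp h0) z]
            simp
          rcases hw with rfl | rfl <;>
            · simp only [SetLike.mem_coe, Submodule.mem_comap, LieAlgebra.ad_apply]
              rw [hz]
              exact I.zero_mem
        · intro w hw
          simp only [Submodule.mem_comap, LieAlgebra.ad_apply]
          exact Submodule.mem_sup_left (Submodule.mem_sup_right (hstd x' h0 w hw))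
        · refine iSup₂_le fun ξ hξ => ?_
          intro w hw
          simp only [Submodule.mem_comap, LieAlgebra.ad_apply]
          have h1 := rootSpace_lie' h0 hw
          rw [zero_add] at h1
          exact Submodule.mem_sup_right
            (Submodule.mem_iSup_of_mem ξ (Submodule.mem_iSup_of_mem hξ h1))
      · have hmemI : ∀ w' ∈ rootSpace t σ, w' ∈ I := fun w' hw' =>
          Submodule.mem_sup_right
            (Submodule.mem_iSup_of_mem σ (Submodule.mem_iSup_of_mem hσ hw'))
        refine sup_le (sup_le ?_ ?_) ?_
        · rw [Submodule.span_le]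
          rintro w hw
          simp only [Set.mem_insert_iff, Set.mem_singleton_iff] at hw
          have hz : ∀ z : t, ⁅x', (z : g)⁆ ∈ rootSpace t σ := by
            intro z
            have h1 : ⁅x', (z : g)⁆ = -(σ z • x') := by
              rw [← lie_skew, (mem_rootSpace_iff'.mp hσx) z]
            rw [h1]
            exact Submodule.neg_mem _ (Submodule.smul_mem _ _ hσx)
          rcases hw with rfl | rfl <;>
            · simp only [SetLike.mem_coe, Submodule.mem_comap, LieAlgebra.ad_apply]
              exact hmemI _ (hz _)
        · intro w hw
          simp only [Submodule.mem_comap, LieAlgebra.ad_apply]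
          have hw0 : w ∈ rootSpace t 0 := ((hn w).mp hw).1
          have h1 := rootSpace_lie' hσx hw0
          rw [add_zero] at h1
          exact hmemI _ h1
        · refine iSup₂_le fun ξ hξ => ?_
          intro w hw
          simp only [Submodule.mem_comap, LieAlgebra.ad_apply]
          by_cases hξσ : ξ = σ
          · subst hξσ
            have h2 : ⁅x', w⁆ = p (x' + w) - p x' - p w := by
              rw [hp.add_pow x' w]
              abel
            rw [h2]
            have hA := hptrick ξ hξ _ (Submodule.add_mem _ hσx hw)
            have hB := hptrick ξ hξ x' hσx
            have hC := hptrick ξ hξ w hw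
            have hle : Submodule.span F ({(t₂ : g), (t₃ : g)} : Set g) ⊔ n ≤ I :=
              le_sup_left
            exact Submodule.sub_mem _ (Submodule.sub_mem _ (hle hA) (hle hB)) (hle hC)
          · have h1 := rootSpace_lie' hσx hw
            have hmem := hsum_root σ hσ ξ hξ (fun h => hξσ h.symm)
            exact Submodule.mem_sup_right
              (Submodule.mem_iSup_of_mem _ (Submodule.mem_iSup_of_mem hmem h1))
    have h9 := hIle hy
    simpa using h9
  -- decomposition machinery
  have hcomm : ∀ (i j : t) (z : g), ⁅(i : g), ⁅(j : g), z⁆⁆ = ⁅(j : g), ⁅(i : g), z⁆⁆ := by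
    intro i j z
    have hij : ⁅(i : g), (j : g)⁆ = 0 := by
      have hj0 : (j : g) ∈ rootSpace t 0 := hts j.2
      have h1 := (mem_rootSpace_iff'.mp hj0) i
      simpa using h1
    rw [leibniz_lie, hij, zero_lie, zero_add]
  have hidem : ∀ i : t, p (i : g) = (i : g) → ∀ z : g,
      ⁅(i : g), ⁅(i : g), z⁆⁆ = ⁅(i : g), z⁆ := by
    intro i hi z
    rw [← hp.ad_pow, hi]
  have hsplit : ∀ i : t, p (i : g) = (i : g) → ∀ z : g, ∃ z₀ z₁ : g,
      z = z₀ + z₁ ∧ ⁅(i : g), z₀⁆ = (0 : F) • z₀ ∧ ⁅(i : g), z₁⁆ = (1 : F) • z₁ ∧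
      ∀ (j : t) (c : F), ⁅(j : g), z⁆ = c • z →
        ⁅(j : g), z₀⁆ = c • z₀ ∧ ⁅(j : g), z₁⁆ = c • z₁ := by
    intro i hi z
    refine ⟨z - ⁅(i : g), z⁆, ⁅(i : g), z⁆, by abel, ?_, ?_, ?_⟩
    · rw [lie_sub, hidem i hi z, sub_self, zero_smul]
    · rw [hidem i hi z, one_smul]
    · intro j c hj
      have h1 : ⁅(j : g), ⁅(i : g), z⁆⁆ = c • ⁅(i : g), z⁆ := by
        rw [← hcomm i j z, hj, lie_smul]
      exact ⟨by rw [lie_sub, hj, h1, smul_sub], h1⟩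
  have hmemS : ∀ (c₁ c₂ c₃ : F) (z : g), (c₁ = 0 ∨ c₁ = 1) → (c₂ = 0 ∨ c₂ = 1) →
      (c₃ = 0 ∨ c₃ = 1) → ⁅(t₁ : g), z⁆ = c₁ • z → ⁅(t₂ : g), z⁆ = c₂ • z →
      ⁅(t₃ : g), z⁆ = c₃ • z → z ∈ S := by
    intro c₁ c₂ c₃ z h1 h2 h3 e1 e2 e3
    have hval1 : (c₁ • α + c₂ • β + c₃ • γ) t₁ = c₁ := by simp [ha1, hb1, hc1]
    have hval2 : (c₁ • α + c₂ • β + c₃ • γ) t₂ = c₂ := by simp [ha2, hb2, hc2]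
    have hval3 : (c₁ • α + c₂ • β + c₃ • γ) t₃ = c₃ := by simp [ha3, hb3, hc3]
    have hz : z ∈ rootSpace t (c₁ • α + c₂ • β + c₃ • γ) := by
      refine mem_rootSpace_iff'.mpr fun w => ?_
      have hwmem : w ∈ Submodule.span F ({t₁, t₂, t₃} : Set t) := by rw [hspan]; trivial
      induction hwmem using Submodule.span_induction with
      | mem w' hw' =>
        simp only [Set.mem_insert_iff, Set.mem_singleton_iff] at hw'
        rcases hw' with rfl | rfl | rfl
        · rw [hval1]; exact e1
        · rw [hval2]; exact e2
        · rw [hval3]; exact e3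
      | zero => simp
      | add w₁ w₂ hw₁ hw₂ ih₁ ih₂ =>
        show ⁅(w₁ : g) + (w₂ : g), z⁆ = _
        rw [add_lie, ih₁, ih₂, map_add, add_smul]
      | smul c w' hw' ih =>
        show ⁅c • (w' : g), z⁆ = _
        rw [smul_lie, ih, smul_smul, map_smul, smul_eq_mul]
    by_cases hall : c₁ = 0 ∧ c₂ = 0 ∧ c₃ = 0
    · obtain ⟨rfl, rfl, rfl⟩ := hall
      refine Submodule.mem_sup_left ?_
      simpa using hz
    · have hmem : (c₁ • α + c₂ • β + c₃ • γ) ∈ rootSet t := by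
        apply hmem7
        · rw [hval1]; exact h1
        · rw [hval2]; exact h2
        · rw [hval3]; exact h3
        · rw [hval1, hval2, hval3]; exact hall
      exact Submodule.mem_sup_right
        (Submodule.mem_iSup_of_mem _ (Submodule.mem_iSup_of_mem hmem hz))
  have hdec : ∀ z : g, z ∈ S := by
    intro z
    obtain ⟨a₀, a₁, hza, ha₀, ha₁, hpa⟩ := hsplit t₁ htor1 z
    obtain ⟨b₀, b₁, hab0, hb₀, hb₁, hpb0⟩ := hsplit t₂ htor2 a₀
    obtain ⟨b₂, b₃, hab1, hb₂, hb₃, hpb1⟩ := hsplit t₂ htor2 a₁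
    have hA0 := hpb0 t₁ 0 ha₀
    have hA1 := hpb1 t₁ 1 ha₁
    obtain ⟨d₀, d₁, hd01, hd₀, hd₁, hpd0⟩ := hsplit t₃ htor3 b₀
    obtain ⟨d₂, d₃, hd23, hd₂, hd₃, hpd2⟩ := hsplit t₃ htor3 b₁
    obtain ⟨d₄, d₅, hd45, hd₄, hd₅, hpd4⟩ := hsplit t₃ htor3 b₂
    obtain ⟨d₆, d₇, hd67, hd₆, hd₇, hpd6⟩ := hsplit t₃ htor3 b₃
    rw [hza, hab0, hab1, hd01, hd23, hd45, hd67]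
    refine Submodule.add_mem _ (Submodule.add_mem _ (Submodule.add_mem _ ?_ ?_)
      (Submodule.add_mem _ ?_ ?_)) (Submodule.add_mem _ (Submodule.add_mem _ ?_ ?_)
      (Submodule.add_mem _ ?_ ?_))
    · exact hmemS 0 0 0 d₀ (Or.inl rfl) (Or.inl rfl) (Or.inl rfl)
        (hpd0 t₁ 0 hA0.1).1 (hpd0 t₂ 0 hb₀).1 hd₀
    · exact hmemS 0 0 1 d₁ (Or.inl rfl) (Or.inl rfl) (Or.inr rfl)
        (hpd0 t₁ 0 hA0.1).2 (hpd0 t₂ 0 hb₀).2 hd₁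
    · exact hmemS 0 1 0 d₂ (Or.inl rfl) (Or.inr rfl) (Or.inl rfl)
        (hpd2 t₁ 0 hA0.2).1 (hpd2 t₂ 1 hb₁).1 hd₂
    · exact hmemS 0 1 1 d₃ (Or.inl rfl) (Or.inr rfl) (Or.inr rfl)
        (hpd2 t₁ 0 hA0.2).2 (hpd2 t₂ 1 hb₁).2 hd₃
    · exact hmemS 1 0 0 d₄ (Or.inr rfl) (Or.inl rfl) (Or.inl rfl)
        (hpd4 t₁ 1 hA1.1).1 (hpd4 t₂ 0 hb₂).1 hd₄
    · exact hmemS 1 0 1 d₅ (Or.inr rfl) (Or.inl rfl) (Or.inr rfl)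
        (hpd4 t₁ 1 hA1.1).2 (hpd4 t₂ 0 hb₂).2 hd₅
    · exact hmemS 1 1 0 d₆ (Or.inr rfl) (Or.inr rfl) (Or.inl rfl)
        (hpd6 t₁ 1 hA1.2).1 (hpd6 t₂ 1 hb₃).1 hd₆
    · exact hmemS 1 1 1 d₇ (Or.inr rfl) (Or.inr rfl) (Or.inr rfl)
        (hpd6 t₁ 1 hA1.2).2 (hpd6 t₂ 1 hb₃).2 hd₇
  -- conclude
  have hxS : x ∈ S := hdec x
  have hSJ : S ≤ Submodule.comap (LieAlgebra.ad F g y) I := by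
    rw [hS]
    refine sup_le ?_ (iSup₂_le fun σ hσ => ?_)
    · intro z hz
      have h1 : ⁅z, y⁆ ∈ I := main z (Or.inl hz)
      simp only [Submodule.mem_comap, LieAlgebra.ad_apply]
      rw [← lie_skew]
      exact Submodule.neg_mem _ h1
    · intro z hz
      have h1 : ⁅z, y⁆ ∈ I := main z (Or.inr ⟨σ, hσ, hz⟩)
      simp only [Submodule.mem_comap, LieAlgebra.ad_apply]
      rw [← lie_skew]
      exact Submodule.neg_mem _ h1
  have h2 := hSJ hxS
  simp only [Submodule.mem_comap, LieAlgebra.ad_apply] at h2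
  rw [← lie_skew]
  exact Submodule.neg_mem _ h2
end
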